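/- For every finite simple graph G with a(G) ≤ 1/2, the second categorical power satisfies a(G^{×2}) = a(G), where a(K) = max{|U|/(|U| + |N_K(U)|) : U a nonempty independent set of K}. -/

import Mathlib

open scoped Classical
open Filter

/-- Categorical (tensor) product of two simple graphs. -/
def tensorProd {α β : Type*} (G : SimpleGraph α) (H : SimpleGraph β) :
    SimpleGraph (α × β) where
  Adj p q := G.Adj p.1 q.1 ∧ H.Adj p.2 q.2
  symm := ⟨fun p q h => ⟨h.1.symm, h.2.symm⟩⟩
  loopless := ⟨fun p h => G.irrefl h.1⟩

/-- A finset is independent. -/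
def IsIndep {α : Type*} (G : SimpleGraph α) (U : Finset α) : Prop :=
  ∀ u ∈ U, ∀ v ∈ U, ¬ G.Adj u v

/-- Neighborhood of a finset. -/
noncomputable def nbhd {α : Type*} [Fintype α] (G : SimpleGraph α) (U : Finset α) : Finset α :=
  Finset.univ.filter (fun v => ∃ u ∈ U, G.Adj u v)

/-- Independence number. -/
noncomputable def alphaNum {α : Type*} [Fintype α] (G : SimpleGraph α) : ℕ :=
  sSup {n : ℕ | ∃ U : Finset α, IsIndep G U ∧ U.card = n}

/-- Independence ratio. -/
noncomputable def iRatio {α : Type*} [Fintype α] (G : SimpleGraph α) : ℝ :=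
  (alphaNum G : ℝ) / (Fintype.card α : ℝ)

/-- a(G): the maximum of |U|/(|U|+|N(U)|) over nonempty independent sets. -/
noncomputable def aRatio {α : Type*} [Fintype α] (G : SimpleGraph α) : ℝ :=
  sSup {r : ℝ | ∃ U : Finset α, U.Nonempty ∧ IsIndep G U ∧
    r = (U.card : ℝ) / ((U.card : ℝ) + ((nbhd G U).card : ℝ))}

/-- b(G): the minimum of |N(U)|/|U| over nonempty independent sets. -/
noncomputable def bRatio {α : Type*} [Fintype α] (G : SimpleGraph α) : ℝ :=
  sInf {r : ℝ | ∃ U : Finset α, U.Nonempty ∧ IsIndep G U ∧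
    r = ((nbhd G U).card : ℝ) / (U.card : ℝ)}

/-- a*(G). -/
noncomputable def aStar {α : Type*} [Fintype α] (G : SimpleGraph α) : ℝ :=
  if aRatio G ≤ 1/2 then aRatio G else 1

/-- k-th categorical power of G. -/
def tensorPow {α : Type*} (G : SimpleGraph α) (k : ℕ) : SimpleGraph (Fin k → α) where
  Adj x y := x ≠ y ∧ ∀ i, G.Adj (x i) (y i)
  symm := ⟨fun x y h => ⟨h.1.symm, fun i => (h.2 i).symm⟩⟩
  loopless := ⟨fun x h => h.1 rfl⟩

/-- Disjoint union of two simple graphs. -/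
def disjUnion {α β : Type*} (G : SimpleGraph α) (H : SimpleGraph β) :
    SimpleGraph (α ⊕ β) where
  Adj p q := match p, q with
    | Sum.inl a, Sum.inl b => G.Adj a b
    | Sum.inr a, Sum.inr b => H.Adj a b
    | _, _ => False
  symm := ⟨by rintro (a|a) (b|b) h <;> simp_all <;> exact h.symm⟩
  loopless := ⟨by rintro (a|a) h <;> simp_all⟩

/-! With `a := a(G) > 0` and `b := (1 - a) / a`, a nonempty independent set `U` of a graph `K`
has ratio `|U| / (|U| + |N(U)|) ≤ a` iff `|N(U)| ≥ b |U|`; so `a(K) ≤ a` says that `K` expands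
its independent sets by the factor `b`, and `a ≤ 1/2` means `b ≥ 1`.

`a(G × G) ≥ a(G)`: `G` has no isolated vertex, so `N(U × V) = N(U) × V` and `U × V` has the
ratio of `U`.

`a(G × G) ≤ a(G)`: expansion by a factor `b ≥ 1` passes from `G` and `H` to `G × H`. An
independent `W` is cut into columns `X_y` in `G`, its neighbourhood is the union of the
`{v} × N(S_v)` over the links `S_v = {y | ∃ x ~ v, (x, y) ∈ W}` in `H`, and a double counting
trades the expansion of the columns for that of the links. -/

open Finset

lemma isIndep_singleton {α : Type*} (G : SimpleGraph α) (v : α) : IsIndep G {v} := by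
  intro u hu w hw
  rw [mem_singleton] at hu hw
  subst hu hw
  exact G.irrefl

section

variable {α β : Type*} [Fintype α] [Fintype β]

lemma mem_nbhd {G : SimpleGraph α} {U : Finset α} {v : α} :
    v ∈ nbhd G U ↔ ∃ u ∈ U, G.Adj u v := by
  simp [nbhd]

lemma nbhd_mono (G : SimpleGraph α) {U V : Finset α} (h : U ⊆ V) : nbhd G U ⊆ nbhd G V :=
  fun _ hv ↦ by
    obtain ⟨u, hu, huv⟩ := mem_nbhd.1 hv
    exact mem_nbhd.2 ⟨u, h hu, huv⟩

lemma isIndep_sdiff_nbhd (G : SimpleGraph α) (T : Finset α) : IsIndep G (T \ nbhd G T) := by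
  intro u hu v hv huv
  exact (mem_sdiff.1 hv).2 (mem_nbhd.2 ⟨u, (mem_sdiff.1 hu).1, huv⟩)

def HasIndepExpansion (G : SimpleGraph α) (b : ℝ) : Prop :=
  ∀ U : Finset α, IsIndep G U → b * #U ≤ #(nbhd G U)

namespace HasIndepExpansion

variable {G : SimpleGraph α} {b : ℝ}

lemma exists_adj (hG : HasIndepExpansion G b) (hb : 0 < b) (v : α) : ∃ w, G.Adj v w := by
  have h := hG {v} (isIndep_singleton G v)
  obtain ⟨w, hw⟩ : (nbhd G {v}).Nonempty := by
    rw [← card_pos, ← Nat.cast_pos (α := ℝ)]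
    simp only [card_singleton, Nat.cast_one, mul_one] at h
    linarith
  obtain ⟨u, hu, huw⟩ := mem_nbhd.1 hw
  exact ⟨w, mem_singleton.1 hu ▸ huw⟩

/-- `T \ N(T)` is independent and its neighbourhood misses `T ∩ N(T)`. -/
lemma mul_card_sdiff_add_card_inter_le (hG : HasIndepExpansion G b) (T : Finset α) :
    b * #(T \ nbhd G T) + #(T ∩ nbhd G T) ≤ #(nbhd G T) := by
  have hdisj : Disjoint (nbhd G (T \ nbhd G T)) (T ∩ nbhd G T) := by
    refine disjoint_right.2 fun z hz hzN ↦ ?_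
    obtain ⟨u, hu, huz⟩ := mem_nbhd.1 hzN
    exact (mem_sdiff.1 hu).2 (mem_nbhd.2 ⟨z, (mem_inter.1 hz).1, huz.symm⟩)
  have hcard : #(nbhd G (T \ nbhd G T)) + #(T ∩ nbhd G T) ≤ #(nbhd G T) := by
    rw [← card_union_of_disjoint hdisj]
    exact card_le_card (union_subset (nbhd_mono G sdiff_subset) inter_subset_right)
  have := hG _ (isIndep_sdiff_nbhd G T)
  rify at hcard
  linarith

end HasIndepExpansion

noncomputable def column (W : Finset (α × β)) (y : β) : Finset α := {x | (x, y) ∈ W}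

noncomputable def link (G : SimpleGraph α) (W : Finset (α × β)) (v : α) : Finset β :=
  {y | ∃ x, G.Adj v x ∧ (x, y) ∈ W}

section Counting

variable (G : SimpleGraph α) (H : SimpleGraph β) (W : Finset (α × β))

lemma mem_link {v : α} {y : β} : y ∈ link G W v ↔ ∃ x, G.Adj v x ∧ (x, y) ∈ W := by
  simp [link]

omit [Fintype β] in
lemma mem_column {x : α} {y : β} : x ∈ column W y ↔ (x, y) ∈ W := by
  simp [column]

lemma card_eq_sum_card_column : #W = ∑ y, #(column W y) := by
  simp only [column, card_filter]
  rw [← Fintype.sum_prod_type_right (f := fun q ↦ if q ∈ W then 1 else 0), sum_boole]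
  simp

lemma card_nbhd_tensorProd : #(nbhd (tensorProd G H) W) = ∑ v, #(nbhd H (link G W v)) := by
  simp only [nbhd, card_filter]
  rw [Fintype.sum_prod_type]
  refine sum_congr rfl fun v _ ↦ sum_congr rfl fun w _ ↦ if_congr ?_ rfl rfl
  simp only [link, tensorProd, mem_filter, mem_univ, true_and, Prod.exists]
  exact ⟨fun ⟨x, y, hxy, hxv, hyw⟩ ↦ ⟨y, ⟨x, hxv.symm, hxy⟩, hyw⟩,
    fun ⟨y, ⟨x, hvx, hxy⟩, hyw⟩ ↦ ⟨x, y, hxy, hvx.symm, hyw⟩⟩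

lemma sum_card_link : ∑ v, #(link G W v) = ∑ y, #(nbhd G (column W y)) := by
  refine (sum_card_bipartiteAbove_eq_sum_card_bipartiteBelow
    (r := fun v y ↦ ∃ x, G.Adj v x ∧ (x, y) ∈ W)).trans (sum_congr rfl fun y _ ↦ ?_)
  congr 1
  ext v
  simp only [bipartiteBelow, mem_nbhd, column, mem_filter, mem_univ, true_and]
  exact exists_congr fun x ↦ ⟨fun ⟨hvx, hxy⟩ ↦ ⟨hxy, hvx.symm⟩, fun ⟨hxy, hxv⟩ ↦ ⟨hxv.symm, hxy⟩⟩

/-- A point `(x, y)` with `x ∈ N(column y)` gives `y ∈ link x`, and independence of `W` keeps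
`y` out of `N(link x)`. -/
lemma sum_card_column_inter_nbhd_le (hW : IsIndep (tensorProd G H) W) :
    ∑ y, #(column W y ∩ nbhd G (column W y)) ≤ ∑ v, #(link G W v \ nbhd H (link G W v)) := by
  let r : α → β → Prop := fun v y ↦ y ∈ link G W v \ nbhd H (link G W v)
  have hsub (y : β) : column W y ∩ nbhd G (column W y) ⊆ univ.bipartiteBelow r y := by
    intro x hx
    obtain ⟨hxy, hxN⟩ := mem_inter.1 hx
    obtain ⟨x', hx', hx'x⟩ := mem_nbhd.1 hxN
    refine mem_filter.2 ⟨mem_univ x, mem_sdiff.2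
      ⟨(mem_link G W).2 ⟨x', hx'x.symm, (mem_column W).1 hx'⟩, ?_⟩⟩
    intro hyN
    obtain ⟨y', hy', hy'y⟩ := mem_nbhd.1 hyN
    obtain ⟨x'', hxx'', hx''y'⟩ := (mem_link G W).1 hy'
    exact hW _ ((mem_column W).1 hxy) _ hx''y' ⟨hxx'', hy'y.symm⟩
  calc ∑ y, #(column W y ∩ nbhd G (column W y))
      ≤ ∑ y, #(univ.bipartiteBelow r y) := sum_le_sum fun y _ ↦ card_le_card (hsub y)
    _ = ∑ v, #(univ.bipartiteAbove r v) :=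
        (sum_card_bipartiteAbove_eq_sum_card_bipartiteBelow (r := r)).symm
    _ = ∑ v, #(link G W v \ nbhd H (link G W v)) := by
        simp only [bipartiteAbove, r, filter_mem_eq_inter, univ_inter]

end Counting

/-- With `X y := column W y` and `S v := link G W v`, the column bound
`b |X| ≤ |N(X)| + (b - 1) |X ∩ N(X)|` summed over `y` turns, through the two double countings,
into the link bound `|S| + (b - 1) |S \ N(S)| ≤ |N(S)|` summed over `v`. -/
theorem HasIndepExpansion.tensorProd {G : SimpleGraph α} {H : SimpleGraph β} {b : ℝ} (hb : 1 ≤ b)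
    (hG : HasIndepExpansion G b) (hH : HasIndepExpansion H b) :
    HasIndepExpansion (tensorProd G H) b := by
  intro W hW
  set X := column W
  set S := link G W
  have hX (y : β) : b * #(X y) ≤ #(nbhd G (X y)) + (b - 1) * #(X y ∩ nbhd G (X y)) := by
    have h := hG.mul_card_sdiff_add_card_inter_le (X y)
    rw [← card_sdiff_add_card_inter (X y) (nbhd G (X y)), Nat.cast_add]
    linarith
  have hS (v : α) : #(S v) + (b - 1) * #(S v \ nbhd H (S v)) ≤ #(nbhd H (S v)) := by
    have h := hH.mul_card_sdiff_add_card_inter_le (S v)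
    rw [← card_sdiff_add_card_inter (S v) (nbhd H (S v)), Nat.cast_add]
    linarith
  have hinter : ∑ y, (#(X y ∩ nbhd G (X y)) : ℝ) ≤ ∑ v, (#(S v \ nbhd H (S v)) : ℝ) := by
    exact_mod_cast sum_card_column_inter_nbhd_le G H W hW
  calc b * #W = ∑ y, b * #(X y) := by
        rw [card_eq_sum_card_column W, Nat.cast_sum, mul_sum]
    _ ≤ ∑ y, (#(nbhd G (X y)) + (b - 1) * #(X y ∩ nbhd G (X y)) : ℝ) := sum_le_sum fun y _ ↦ hX y
    _ = ∑ v, (#(S v) : ℝ) + (b - 1) * ∑ y, (#(X y ∩ nbhd G (X y)) : ℝ) := by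
        rw [sum_add_distrib, mul_sum, ← Nat.cast_sum, ← Nat.cast_sum, sum_card_link G W]
    _ ≤ ∑ v, (#(S v) : ℝ) + (b - 1) * ∑ v, (#(S v \ nbhd H (S v)) : ℝ) := by
        gcongr
    _ = ∑ v, (#(S v) + (b - 1) * #(S v \ nbhd H (S v)) : ℝ) := by
        rw [sum_add_distrib, mul_sum]
    _ ≤ ∑ v, (#(nbhd H (S v)) : ℝ) := sum_le_sum fun v _ ↦ hS v
    _ = #(nbhd _ W) := by
        rw [card_nbhd_tensorProd G H W, Nat.cast_sum]

lemma le_aRatio (G : SimpleGraph α) {U : Finset α} (hU : U.Nonempty) (hi : IsIndep G U) :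
    (#U / (#U + #(nbhd G U)) : ℝ) ≤ aRatio G :=
  le_csSup ⟨1, by rintro _ ⟨V, -, -, rfl⟩; exact div_le_one_of_le₀ (by simp) (by positivity)⟩
    ⟨U, hU, hi, rfl⟩

lemma aRatio_le [Nonempty α] (G : SimpleGraph α) {c : ℝ}
    (h : ∀ U : Finset α, U.Nonempty → IsIndep G U → (#U / (#U + #(nbhd G U)) : ℝ) ≤ c) :
    aRatio G ≤ c :=
  csSup_le ⟨_, {Classical.arbitrary α}, singleton_nonempty _, isIndep_singleton G _, rfl⟩
    (by rintro _ ⟨U, hU, hi, rfl⟩; exact h U hU hi)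

lemma aRatio_pos [Nonempty α] (G : SimpleGraph α) : 0 < aRatio G := by
  refine lt_of_lt_of_le ?_ (le_aRatio G (singleton_nonempty (Classical.arbitrary α))
    (isIndep_singleton G _))
  positivity

lemma div_add_le_iff_one_sub_div_mul_le {a u m : ℝ} (ha : 0 < a) (hu : 0 < u) (hm : 0 ≤ m) :
    u / (u + m) ≤ a ↔ (1 - a) / a * u ≤ m := by
  rw [div_le_iff₀ (by linarith), div_mul_eq_mul_div, div_le_iff₀ ha]
  constructor <;> intro h <;> linarith

lemma aRatio_le_iff_hasIndepExpansion [Nonempty α] (G : SimpleGraph α) {a : ℝ} (ha : 0 < a) :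
    aRatio G ≤ a ↔ HasIndepExpansion G ((1 - a) / a) := by
  constructor
  · intro h U hi
    obtain rfl | hU := U.eq_empty_or_nonempty
    · simp
    exact (div_add_le_iff_one_sub_div_mul_le ha (by simpa) (by positivity)).1
      ((le_aRatio G hU hi).trans h)
  · intro h
    exact aRatio_le G fun U hU hi ↦
      (div_add_le_iff_one_sub_div_mul_le ha (by simpa) (by positivity)).2 (h U hi)

lemma nbhd_product_univ (G : SimpleGraph α) {H : SimpleGraph β} (hH : ∀ y, ∃ z, H.Adj y z)
    (U : Finset α) : nbhd (tensorProd G H) (U ×ˢ univ) = nbhd G U ×ˢ univ := by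
  ext ⟨v, w⟩
  simp only [mem_nbhd, mem_product, mem_univ, and_true, Prod.exists]
  constructor
  · rintro ⟨u, y, hu, huv, -⟩
    exact ⟨u, hu, huv⟩
  · rintro ⟨u, hu, huv⟩
    obtain ⟨y, hyw⟩ := hH w
    exact ⟨u, y, hu, huv, hyw.symm⟩

omit [Fintype α] in
lemma isIndep_product_univ {G : SimpleGraph α} (H : SimpleGraph β) {U : Finset α}
    (hi : IsIndep G U) : IsIndep (tensorProd G H) (U ×ˢ univ) :=
  fun p hp q hq hpq ↦ hi p.1 (mem_product.1 hp).1 q.1 (mem_product.1 hq).1 hpq.1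

theorem aRatio_le_aRatio_tensorProd [Nonempty α] [Nonempty β] (G : SimpleGraph α)
    {H : SimpleGraph β} (hH : ∀ y, ∃ z, H.Adj y z) : aRatio G ≤ aRatio (tensorProd G H) := by
  refine aRatio_le G fun U hU hi ↦ ?_
  have hn : (0 : ℝ) < Fintype.card β := by exact_mod_cast Fintype.card_pos
  calc (#U / (#U + #(nbhd G U)) : ℝ)
      = #(U ×ˢ univ) / (#(U ×ˢ univ) + #(nbhd (tensorProd G H) (U ×ˢ univ))) := by
        rw [nbhd_product_univ G hH, card_product, card_product, card_univ]
        push_cast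
        rw [← add_mul, mul_div_mul_right _ _ hn.ne']
    _ ≤ aRatio (tensorProd G H) :=
        le_aRatio _ (hU.product univ_nonempty) (isIndep_product_univ H hi)

end

theorem stmt5 {α : Type*} [Fintype α] [Nonempty α] (G : SimpleGraph α)
    (h : aRatio G ≤ 1/2) :
    aRatio (tensorProd G G) = aRatio G := by
  set a := aRatio G
  have ha : 0 < a := aRatio_pos G
  have hb : 1 ≤ (1 - a) / a := by
    rw [le_div_iff₀ ha]
    linarith
  have hG : HasIndepExpansion G ((1 - a) / a) := (aRatio_le_iff_hasIndepExpansion G ha).1 le_rfl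
  refine le_antisymm ?_ (aRatio_le_aRatio_tensorProd G (hG.exists_adj (by linarith)))
  exact (aRatio_le_iff_hasIndepExpansion _ ha).2 (hG.tensorProd hb hG)
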